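/- Let p ≥ 4 be even. Then u(W(p, np+1)) ≤ np(p-1)/2 for every positive integer n. -/

import Mathlib

namespace Weaving

/-- A braid letter: 0-based generator index `k` (representing `σ_{k+1}`) and a sign
(`true` = positive crossing). -/
abbrev Letter := ℕ × Bool

/-- A braid diagram (word). Letters are read from top to bottom. -/
abbrev Word := List Letter

/-- Wellformedness of a word as a braid on `p` strands. -/
def WF (p : ℕ) (w : Word) : Prop := ∀ l ∈ w, l.1 + 2 ≤ p

/-- One round `σ_1 σ_2^{-1} σ_3 ⋯ σ_{p-1}^{(-1)^p}` of the weaving braid on `p` strands. -/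
def wRound (p : ℕ) : Word := (List.range (p - 1)).map fun k => (k, decide (k % 2 = 0))

/-- The weaving braid word `B_W(p,q) = (σ_1 σ_2^{-1} ⋯ σ_{p-1}^{(-1)^p})^q`. -/
def wWord (p q : ℕ) : Word := (List.replicate q (wRound p)).flatten

/-- The transposition of strand positions effected by one letter. -/
def letterPerm (l : Letter) : Equiv.Perm ℕ := Equiv.swap l.1 (l.1 + 1)

/-- The permutation of a braid word: sends the top position of a strand to its
bottom position. -/
def permOfWord (w : Word) : Equiv.Perm ℕ := ((w.map letterPerm).reverse).prod

/-- The position permutation just before the `n`-th crossing (0-based). -/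
def permUpTo (w : Word) (n : ℕ) : Equiv.Perm ℕ := permOfWord (w.take n)

/-- The label (top position) of the strand passing over at crossing `n`.
(Convention: at a positive letter `σ_k`, the strand at position `k` passes over.) -/
def overLabel (w : Word) (n : ℕ) : ℕ :=
  let l := w.getD n (0, true)
  (permUpTo w n)⁻¹ (if l.2 then l.1 else l.1 + 1)

/-- The label of the strand passing under at crossing `n`. -/
def underLabel (w : Word) (n : ℕ) : ℕ :=
  let l := w.getD n (0, true)
  (permUpTo w n)⁻¹ (if l.2 then l.1 + 1 else l.1)

/-- The number of warping crossing points of the braid diagram `w` with respect to a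
priority (ordering of base points) `r` on the strand labels: a crossing is warping
if the strand whose base point comes earlier passes under. -/
def warpCount (w : Word) (r : ℕ → ℕ) : ℕ :=
  ((List.range w.length).filter fun n =>
    decide (r (underLabel w n) < r (overLabel w n))).length

/-- The warping degree of a braid diagram: the minimum of `warpCount` over all
orderings of the base points at the tops of the strands. -/
noncomputable def warpingDegree (w : Word) : ℕ :=
  sInf { m | ∃ r : ℕ → ℕ, Function.Injective r ∧ warpCount w r = m }

/-- A sequence of base points (a list enumerating the strands `0,…,p-1`) follows the
closure if, whenever the closure-successor of the current strand has not yet appeared,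
it is the next base point. -/
def FollowsClosure (p : ℕ) (w : Word) (bs : List ℕ) : Prop :=
  bs.Perm (List.range p) ∧ ∀ m, m + 1 < bs.length →
    permOfWord w (bs.getD m 0) ∉ bs.take (m + 1) →
    bs.getD (m + 1) 0 = permOfWord w (bs.getD m 0)

/-- The closed warping degree of a braid diagram. -/
noncomputable def closedWarpingDegree (p : ℕ) (w : Word) : ℕ :=
  sInf { m | ∃ bs : List ℕ, FollowsClosure p w bs ∧
    warpCount w (fun a => List.idxOf a bs) = m }

/-- The strands of the closure component of strand `i`, in traversal order. -/
def strandCycle (w : Word) (p i : ℕ) : List ℕ :=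
  ((List.range p).map fun t => ((permOfWord w)^[t]) i).dedup

/-- The crossings met by strand `i` from top to bottom, with a flag recording whether
the strand passes under there. -/
def strandPassages (w : Word) (i : ℕ) : List (ℕ × Bool) :=
  ((List.range w.length).filter fun n =>
    (overLabel w n == i) || (underLabel w n == i)).map
    fun n => (n, underLabel w n == i)

/-- All the crossing passages of the closure component of strand `i`, in the cyclic
order in which they are traversed starting from the top of strand `i`. -/
def compPassages (w : Word) (p i : ℕ) : List (ℕ × Bool) :=
  (strandCycle w p i).flatMap (strandPassages w)

/-- `starts` contains exactly one strand representative on each closure component. -/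
def ValidStarts (p : ℕ) (w : Word) (starts : List ℕ) : Prop :=
  ∀ i < p, ∃! s, s ∈ starts ∧ i ∈ strandCycle w p s

/-- The passage sequence of the whole closure diagram determined by a choice of
base points: component representatives `starts` and rotations `ts` (positions of the
base points along the components). -/
def fullTraversal (w : Word) (p : ℕ) (starts ts : List ℕ) : List (ℕ × Bool) :=
  ((starts.zip ts).map fun st => (compPassages w p st.1).rotate st.2).flatten

/-- Same, for the reversed orientation of the closure. -/
def fullTraversalRev (w : Word) (p : ℕ) (starts ts : List ℕ) : List (ℕ × Bool) :=
  ((starts.zip ts).map fun st => ((compPassages w p st.1).reverse).rotate st.2).flatten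

/-- Crossing `n` is a warping crossing point of the traversal `T` if it is first met
as an under-crossing. -/
def warpInTraversal (T : List (ℕ × Bool)) (n : ℕ) : Bool :=
  ((T.filter fun x => x.1 == n).headD (0, false)).2

def traversalWarpCount (w : Word) (T : List (ℕ × Bool)) : ℕ :=
  ((List.range w.length).filter fun n => warpInTraversal T n).length

/-- The warping degree of the closure diagram of `w` (with the braid orientation):
the minimum number of warping crossing points over all choices of base points. -/
noncomputable def closureWarpingDegree (p : ℕ) (w : Word) : ℕ :=
  sInf { m | ∃ starts ts : List ℕ, ValidStarts p w starts ∧ ts.length = starts.length ∧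
    traversalWarpCount w (fullTraversal w p starts ts) = m }

/-- The warping degree of the closure diagram of `w` with reversed orientation. -/
noncomputable def closureWarpingDegreeRev (p : ℕ) (w : Word) : ℕ :=
  sInf { m | ∃ starts ts : List ℕ, ValidStarts p w starts ∧ ts.length = starts.length ∧
    traversalWarpCount w (fullTraversalRev w p starts ts) = m }

/-- Relations of the braid group on `p` strands (generators `0,…,p-2`). -/
def braidRels (p : ℕ) : Set (FreeGroup (Fin (p - 1))) :=
  { r | (∃ i j : Fin (p - 1), (i : ℕ) + 1 = (j : ℕ) ∧
          r = FreeGroup.of i * FreeGroup.of j * FreeGroup.of i *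
              (FreeGroup.of j * FreeGroup.of i * FreeGroup.of j)⁻¹) ∨
        (∃ i j : Fin (p - 1), (i : ℕ) + 2 ≤ (j : ℕ) ∧
          r = FreeGroup.of i * FreeGroup.of j * (FreeGroup.of j * FreeGroup.of i)⁻¹) }

/-- The braid group on `p` strands. -/
abbrev BraidGroup (p : ℕ) := PresentedGroup (braidRels p)

def letterToBraid (p : ℕ) (l : Letter) : BraidGroup p :=
  if h : l.1 < p - 1 then
    (if l.2 then PresentedGroup.of ⟨l.1, h⟩ else (PresentedGroup.of ⟨l.1, h⟩)⁻¹)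
  else 1

/-- The element of the braid group represented by a word. -/
def toBraid (p : ℕ) (w : Word) : BraidGroup p := (w.map (letterToBraid p)).prod

/-- Markov moves on closed braid diagrams: braid-group equality, conjugation
(cyclic permutation), and (de)stabilization. -/
inductive MarkovStep : ℕ × Word → ℕ × Word → Prop
  | braid (p : ℕ) (w w' : Word) : WF p w → WF p w' → toBraid p w = toBraid p w' →
      MarkovStep (p, w) (p, w')
  | conj (p : ℕ) (w₁ w₂ : Word) : WF p (w₁ ++ w₂) → MarkovStep (p, w₁ ++ w₂) (p, w₂ ++ w₁)
  | stab (p : ℕ) (w : Word) (b : Bool) : WF p w → 1 ≤ p →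
      MarkovStep (p, w) (p + 1, w ++ [(p - 1, b)])

/-- Two closed braid diagrams represent the same link iff they are Markov equivalent. -/
def MarkovEquiv : ℕ × Word → ℕ × Word → Prop := Relation.EqvGen MarkovStep

/-- The closure of `(p, w)` represents a trivial link (an unlink). -/
def IsTrivialClosure (p : ℕ) (w : Word) : Prop := ∃ r : ℕ, MarkovEquiv (p, w) (r, [])

/-- The canonical representative (minimum label) of the closure component of strand `i`. -/
def orbitMin (w : Word) (p i : ℕ) : ℕ := (strandCycle w p i).foldr min i

/-- The number of components of the closure of `(p, w)`. -/
def numComponents (p : ℕ) (w : Word) : ℕ := ((Finset.range p).image (orbitMin w p)).card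

/-- The closure of `(p, w)` is the unknot. -/
def IsUnknot (p : ℕ) (w : Word) : Prop := IsTrivialClosure p w ∧ numComponents p w = 1

/-- Apply crossing changes at the set `S` of crossing indices. -/
def flipAt (w : Word) (S : Finset ℕ) : Word :=
  (w.zipIdx.map Prod.swap).map fun nl => if nl.1 ∈ S then (nl.2.1, !nl.2.2) else nl.2

/-- `u(B)`: the minimum number of crossing changes on the braid diagram `w` making its
closure a trivial link. -/
noncomputable def braidUnknottingNumber (p : ℕ) (w : Word) : ℕ :=
  sInf { m | ∃ S : Finset ℕ, S ⊆ Finset.range w.length ∧ S.card = m ∧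
    IsTrivialClosure p (flipAt w S) }

/-- The unknotting (unlinking) number of the link represented by the closure of
`(p, w)`: the minimum number of crossing changes over all diagrams of the link. -/
noncomputable def linkUnknottingNumber (p : ℕ) (w : Word) : ℕ :=
  sInf { m | ∃ p' w', MarkovEquiv (p, w) (p', w') ∧
    ∃ S : Finset ℕ, S ⊆ Finset.range w'.length ∧ S.card = m ∧
      IsTrivialClosure p' (flipAt w' S) }

/-- The sign of crossing `n` (all strands oriented downwards). -/
def crossingSign (w : Word) (n : ℕ) : ℤ := if (w.getD n (0, true)).2 then 1 else -1

/-- The linking number of the closure components of strands `i` and `j` (assumed to lie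
on distinct components): half the signed count of their mutual crossings. -/
def lk (w : Word) (i j : ℕ) : ℤ :=
  (∑ n ∈ Finset.range w.length,
    if (overLabel w n = i ∧ underLabel w n = j) ∨ (overLabel w n = j ∧ underLabel w n = i)
    then crossingSign w n else 0) / 2

/-- The linking number between the closure components represented by `a` and `b`. -/
def compLk (p : ℕ) (w : Word) (a b : ℕ) : ℤ :=
  (∑ n ∈ Finset.range w.length,
    if (orbitMin w p (overLabel w n) = a ∧ orbitMin w p (underLabel w n) = b) ∨
       (orbitMin w p (overLabel w n) = b ∧ orbitMin w p (underLabel w n) = a)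
    then crossingSign w n else 0) / 2

/-- A link is proper if the total linking number of each component with all the
others is even. -/
def IsProper (p : ℕ) (w : Word) : Prop :=
  ∀ a ∈ (Finset.range p).image (orbitMin w p),
    (2 : ℤ) ∣ ∑ b ∈ ((Finset.range p).image (orbitMin w p)).erase a, compLk p w a b

/-- The closure of `(p, w)` is a split link. -/
def IsSplit (p : ℕ) (w : Word) : Prop :=
  ∃ p' w', MarkovEquiv (p, w) (p', w') ∧ WF p' w' ∧
    ∃ k, k + 1 < p' ∧ ∀ l ∈ w', l.1 ≠ k

/-- The connected sum diagram of the closures of a braid on `a` strands and a braid on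
`b` strands, as a braid on `a + b - 1` strands sharing one strand. -/
def connSum (a : ℕ) (w₁ w₂ : Word) : Word := w₁ ++ w₂.map fun l => (l.1 + (a - 1), l.2)

/-- The closure of `(p, w)` is a prime link: it is not the unknot and in every
connected-sum decomposition one factor is the unknot. -/
def IsPrime (p : ℕ) (w : Word) : Prop :=
  ¬ IsUnknot p w ∧
  ∀ a b : ℕ, ∀ w₁ w₂ : Word, 1 ≤ a → 1 ≤ b → WF a w₁ → WF b w₂ →
    MarkovEquiv (p, w) (a + b - 1, connSum a w₁ w₂) →
    IsUnknot a w₁ ∨ IsUnknot b w₂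


/-! ### Auxiliary development -/

section BraidAlgebra

lemma rel_eq_one {p : ℕ} {r : FreeGroup (Fin (p-1))} (h : r ∈ braidRels p) :
    PresentedGroup.mk (braidRels p) r = 1 :=
  (QuotientGroup.eq_one_iff r).mpr (Subgroup.subset_normalClosure h)

lemma of_braid_rel {p : ℕ} (i j : Fin (p-1)) (hij : (i:ℕ)+1 = j) :
    (PresentedGroup.of i : BraidGroup p) * .of j * .of i = .of j * .of i * .of j := by
  have h := rel_eq_one (p := p) (Or.inl ⟨i, j, hij, rfl⟩)
  simp only [map_mul, map_inv, mul_inv_eq_one] at h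
  exact h

lemma of_comm_rel {p : ℕ} (i j : Fin (p-1)) (hij : (i:ℕ)+2 ≤ j) :
    (PresentedGroup.of i : BraidGroup p) * .of j = .of j * .of i := by
  have h := rel_eq_one (p := p) (Or.inr ⟨i, j, hij, rfl⟩)
  simp only [map_mul, map_inv, mul_inv_eq_one] at h
  exact h

/-- `σ k` (0-based). Equals 1 for out-of-range `k`. -/
def sig (p k : ℕ) : BraidGroup p := letterToBraid p (k, true)

lemma letterToBraid_false (p k : ℕ) : letterToBraid p (k, false) = (sig p k)⁻¹ := by
  unfold letterToBraid sig
  by_cases h : k < p - 1 <;> simp [letterToBraid, h]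

lemma sig_braid {p i : ℕ} (h : i + 2 ≤ p - 1) :
    sig p i * sig p (i+1) * sig p i = sig p (i+1) * sig p i * sig p (i+1) := by
  have hi : i < p - 1 := by omega
  have hj : i + 1 < p - 1 := by omega
  have := of_braid_rel (p := p) ⟨i, hi⟩ ⟨i+1, hj⟩ rfl
  unfold sig letterToBraid
  simpa [hi, hj] using this

lemma sig_comm {p i j : ℕ} (h : i + 2 ≤ j) :
    sig p i * sig p j = sig p j * sig p i := by
  by_cases hj : j < p - 1
  · have hi : i < p - 1 := by omega
    have := of_comm_rel (p := p) ⟨i, hi⟩ ⟨j, hj⟩ h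
    unfold sig letterToBraid
    simpa [hi, hj] using this
  · unfold sig letterToBraid
    simp [hj]

variable (p : ℕ)

/-- `σ_a σ_{a+1} ⋯ σ_{a+n-1}`. -/
def asc (a : ℕ) : ℕ → BraidGroup p
  | 0 => 1
  | n+1 => asc a n * sig p (a+n)

/-- `σ_{a+n-1} ⋯ σ_{a+1} σ_a`. -/
def desc (a : ℕ) : ℕ → BraidGroup p
  | 0 => 1
  | n+1 => sig p (a+n) * desc a n

/-- Half twist, ascending form. -/
def Lh (a : ℕ) : ℕ → BraidGroup p
  | 0 => 1
  | n+1 => asc p a (n+1) * Lh a n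

/-- Half twist, descending form. -/
def Rh (a : ℕ) : ℕ → BraidGroup p
  | 0 => 1
  | n+1 => desc p a (n+1) * Rh (a+1) n

lemma sig_comm_asc {j a n : ℕ} (h : j + 2 ≤ a ∨ a + n + 1 ≤ j) :
    sig p j * asc p a n = asc p a n * sig p j := by
  induction n with
  | zero => simp [asc]
  | succ n ih =>
    have hc : sig p j * sig p (a+n) = sig p (a+n) * sig p j := by
      rcases h with h | h
      · exact sig_comm (i := j) (j := a+n) (by omega)
      · exact (sig_comm (i := a+n) (j := j) (by omega)).symm
    have ih' := ih (by omega)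
    rw [asc, ← mul_assoc, ih', mul_assoc, hc, mul_assoc]

lemma sig_comm_desc {j a n : ℕ} (h : j + 2 ≤ a ∨ a + n + 1 ≤ j) :
    sig p j * desc p a n = desc p a n * sig p j := by
  induction n with
  | zero => simp [desc]
  | succ n ih =>
    have hc : sig p j * sig p (a+n) = sig p (a+n) * sig p j := by
      rcases h with h | h
      · exact sig_comm (i := j) (j := a+n) (by omega)
      · exact (sig_comm (i := a+n) (j := j) (by omega)).symm
    have ih' := ih (by omega)
    rw [desc, ← mul_assoc, hc, mul_assoc, ih', mul_assoc]

/-- Key identity `asc a (n+1) * desc a n = desc a (n+1) * asc (a+1) n`. -/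
lemma key (a : ℕ) : ∀ n : ℕ, a + n + 1 ≤ p - 1 →
    asc p a (n+1) * desc p a n = desc p a (n+1) * asc p (a+1) n := by
  intro n
  induction n with
  | zero => intro _; simp [asc, desc]
  | succ n ih =>
    intro h
    have hb : sig p (a+n) * sig p (a+n+1) * sig p (a+n) =
        sig p (a+n+1) * sig p (a+n) * sig p (a+n+1) := sig_braid (by omega)
    calc asc p a (n+2) * desc p a (n+1)
        = asc p a n * (sig p (a+n) * sig p (a+(n+1)) * sig p (a+n)) * desc p a n := by
          simp only [asc, desc, mul_assoc]
      _ = asc p a n * (sig p (a+n+1) * sig p (a+n) * sig p (a+n+1)) * desc p a n := by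
          rw [show a + (n+1) = a+n+1 from rfl, hb]
      _ = sig p (a+n+1) * (asc p a (n+1) * desc p a n) * sig p (a+n+1) := by
          rw [show asc p a (n+1) = asc p a n * sig p (a+n) from rfl]
          have h1 : sig p (a+n+1) * asc p a n = asc p a n * sig p (a+n+1) :=
            sig_comm_asc p (Or.inr (by omega))
          have h2 : sig p (a+n+1) * desc p a n = desc p a n * sig p (a+n+1) := by
            refine sig_comm_desc p (Or.inr (by omega))
          calc asc p a n * (sig p (a+n+1) * sig p (a+n) * sig p (a+n+1)) * desc p a n
              = (asc p a n * sig p (a+n+1)) * sig p (a+n) * (sig p (a+n+1) * desc p a n) := by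
                simp only [mul_assoc]
            _ = (sig p (a+n+1) * asc p a n) * sig p (a+n) * (desc p a n * sig p (a+n+1)) := by
                rw [← h1, h2]
            _ = sig p (a+n+1) * (asc p a n * sig p (a+n) * desc p a n) * sig p (a+n+1) := by
                simp only [mul_assoc]
      _ = sig p (a+n+1) * (desc p a (n+1) * asc p (a+1) n) * sig p (a+n+1) := by
          rw [ih (by omega)]
      _ = desc p a (n+2) * asc p (a+1) (n+1) := by
          simp only [desc, asc, mul_assoc]
          rw [show a + 1 + n = a + n + 1 from by omega, show a + (n+1) = a + n + 1 from rfl]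

lemma Lh_eq_desc_mul (a : ℕ) : ∀ n, a + n + 1 ≤ p - 1 →
    Lh p a (n+1) = desc p a (n+1) * Lh p (a+1) n := by
  intro n
  induction n with
  | zero => intro _; simp [Lh, asc, desc]
  | succ n ih =>
    intro h
    calc Lh p a (n+2) = asc p a (n+2) * (desc p a (n+1) * Lh p (a+1) n) := by
          rw [show Lh p a (n+2) = asc p a (n+2) * Lh p a (n+1) from rfl, ih (by omega)]
      _ = (asc p a (n+2) * desc p a (n+1)) * Lh p (a+1) n := by rw [mul_assoc]
      _ = (desc p a (n+2) * asc p (a+1) (n+1)) * Lh p (a+1) n := by rw [key p a (n+1) (by omega)]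
      _ = desc p a (n+2) * Lh p (a+1) (n+1) := by
          rw [mul_assoc]; rfl

lemma Lh_eq_Rh (n : ℕ) : ∀ a, a + n ≤ p - 1 → Lh p a n = Rh p a n := by
  induction n with
  | zero => intro a _; rfl
  | succ n ih =>
    intro a h
    rw [Lh_eq_desc_mul p a n (by omega), ih (a+1) (by omega)]
    rfl

end BraidAlgebra

section TrivBlock

/-- Round `ρ` of the layered (descending) block. -/
def layeredRound (p ρ : ℕ) : Word :=
  (List.range (p-1)).map fun k => (k, decide (k < p - 1 - ρ))

/-- The trivial layered block: `p` layered rounds. -/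
def trivBlock (p : ℕ) : Word := ((List.range p).map (layeredRound p)).flatten

lemma toBraid_append (p : ℕ) (v w : Word) :
    toBraid p (v ++ w) = toBraid p v * toBraid p w := by
  simp [toBraid]

lemma ascProd (p a : ℕ) : ∀ n,
    (((List.range n).map fun i => letterToBraid p (a + i, true))).prod = asc p a n := by
  intro n
  induction n with
  | zero => simp [asc]
  | succ n ih =>
    rw [List.range_succ]; simp only [List.map_append, List.prod_append]
    simp [ih, asc, sig]

lemma descInvProd (p a : ℕ) : ∀ n,
    (((List.range n).map fun i => letterToBraid p (a + i, false))).prod = (desc p a n)⁻¹ := by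
  intro n
  induction n with
  | zero => simp [desc]
  | succ n ih =>
    rw [List.range_succ]; simp only [List.map_append, List.prod_append]
    rw [ih]
    simp only [List.map_cons, List.map_nil, List.prod_cons, List.prod_nil,
      letterToBraid_false, mul_one, desc, mul_inv_rev]

lemma toBraid_layeredRound (p ρ : ℕ) (h : ρ ≤ p - 1) :
    toBraid p (layeredRound p ρ) = asc p 0 (p-1-ρ) * (desc p (p-1-ρ) ρ)⁻¹ := by
  set c := p - 1 - ρ with hc
  have hsplit : layeredRound p ρ =
      ((List.range c).map fun k => ((k : ℕ), true)) ++
      ((List.range ρ).map fun i => (c + i, false)) := by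
    unfold layeredRound
    rw [show p - 1 = c + ρ by omega, List.range_add, List.map_append, List.map_map]
    congr 1
    · apply List.map_congr_left
      intro k hk
      simp only [List.mem_range] at hk
      have : k < p - 1 - ρ := by omega
      simp [this, hk]
    · apply List.map_congr_left
      intro i hi
      simp only [List.mem_range] at hi
      have : ¬ (c + i < p - 1 - ρ) := by omega
      simp [this]
  rw [hsplit, toBraid_append]
  unfold toBraid
  rw [List.map_map, List.map_map]
  have h1 := ascProd p 0 c
  simp only [zero_add] at h1
  rw [show ((fun l => letterToBraid p l) ∘ fun k => ((k:ℕ), true)) =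
        fun k => letterToBraid p (0 + k, true) by funext k; simp,
      show ((fun l => letterToBraid p l) ∘ fun i => (c + i, false)) =
        fun i => letterToBraid p (c + i, false) by funext i; simp]
  rw [descInvProd]
  rw [show (fun k => letterToBraid p (0 + k, true)) = fun k => letterToBraid p (k, true) by
    funext k; simp]
  rw [← h1]

variable (p : ℕ)

lemma asc_comm_desc : ∀ s a t : ℕ, s + 1 ≤ a →
    asc p 0 s * desc p a t = desc p a t * asc p 0 s := by
  intro s
  induction s with
  | zero => intro a t _; simp [asc]
  | succ s ih =>
    intro a t h
    show asc p 0 s * sig p (0 + s) * desc p a t = desc p a t * (asc p 0 s * sig p (0+s))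
    rw [mul_assoc, sig_comm_desc p (j := 0 + s) (a := a) (n := t) (Or.inl (by omega)),
      ← mul_assoc, ih a t (by omega), mul_assoc]

/-- `LPf m = asc 0 q * asc 0 (q-1) * ⋯ * asc 0 (q-m+1)` with `q := p-1`. -/
def LPf : ℕ → BraidGroup p
  | 0 => 1
  | m+1 => LPf m * asc p 0 (p-1-m)

/-- `RPf m = desc (q-(m-1)) (m-1) * ⋯ * desc (q-1) 1 * desc q 0`. -/
def RPf : ℕ → BraidGroup p
  | 0 => 1
  | m+1 => desc p (p-1-m) m * RPf m

lemma RPf_comm : ∀ m s : ℕ, s + m ≤ p - 1 → asc p 0 s * RPf p m = RPf p m * asc p 0 s := by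
  intro m
  induction m with
  | zero => intro s _; simp [RPf]
  | succ m ih =>
    intro s h
    show asc p 0 s * (desc p (p-1-m) m * RPf p m) = (desc p (p-1-m) m * RPf p m) * asc p 0 s
    rw [← mul_assoc, asc_comm_desc p s (p-1-m) m (by omega), mul_assoc, ih s (by omega),
      ← mul_assoc]

lemma toBraid_trivPart : ∀ m : ℕ, m ≤ p →
    toBraid p (((List.range m).map (layeredRound p)).flatten) = LPf p m * (RPf p m)⁻¹ := by
  intro m
  induction m with
  | zero =>
    intro _
    simp [toBraid, LPf, RPf]
  | succ m ih =>
    intro h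
    rw [List.range_succ, List.map_append, List.flatten_append]
    rw [toBraid_append, ih (by omega)]
    simp only [List.map_cons, List.map_nil, List.flatten_cons, List.flatten_nil, List.append_nil]
    rw [toBraid_layeredRound p m (by omega)]
    have hcomm : (RPf p m)⁻¹ * asc p 0 (p-1-m) = asc p 0 (p-1-m) * (RPf p m)⁻¹ := by
      have := RPf_comm p m (p-1-m) (by omega)
      calc (RPf p m)⁻¹ * asc p 0 (p-1-m)
          = (RPf p m)⁻¹ * (asc p 0 (p-1-m) * RPf p m) * (RPf p m)⁻¹ := by group
        _ = (RPf p m)⁻¹ * (RPf p m * asc p 0 (p-1-m)) * (RPf p m)⁻¹ := by rw [this]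
        _ = asc p 0 (p-1-m) * (RPf p m)⁻¹ := by group
    calc LPf p m * (RPf p m)⁻¹ * (asc p 0 (p-1-m) * (desc p (p-1-m) m)⁻¹)
        = LPf p m * ((RPf p m)⁻¹ * asc p 0 (p-1-m)) * (desc p (p-1-m) m)⁻¹ := by group
      _ = LPf p m * (asc p 0 (p-1-m) * (RPf p m)⁻¹) * (desc p (p-1-m) m)⁻¹ := by rw [hcomm]
      _ = (LPf p m * asc p 0 (p-1-m)) * ((RPf p m)⁻¹ * (desc p (p-1-m) m)⁻¹) := by group
      _ = LPf p (m+1) * (RPf p (m+1))⁻¹ := by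
          rw [show RPf p (m+1) = desc p (p-1-m) m * RPf p m from rfl, mul_inv_rev]; rfl

lemma LPf_eq_Lh : ∀ m : ℕ, m ≤ p - 1 → LPf p m * Lh p 0 (p-1-m) = Lh p 0 (p-1) := by
  intro m
  induction m with
  | zero => simp [LPf]
  | succ m ih =>
    intro h
    show LPf p m * asc p 0 (p-1-m) * Lh p 0 (p-1-(m+1)) = _
    rw [mul_assoc, show asc p 0 (p-1-m) * Lh p 0 (p-1-(m+1)) = Lh p 0 (p-1-m) by
      rw [show p-1-m = (p-1-(m+1))+1 by omega]; rfl]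
    exact ih (by omega)

lemma RPf_eq_Rh : ∀ m : ℕ, m ≤ p - 1 → RPf p (m+1) = Rh p (p-1-m) m := by
  intro m
  induction m with
  | zero => intro _; show desc p (p-1) 0 * RPf p 0 = 1; simp [desc, RPf]
  | succ m ih =>
    intro h
    show desc p (p-1-(m+1)) (m+1) * RPf p (m+1) = _
    rw [ih (by omega)]
    show _ = Rh p (p-1-(m+1)) (m+1)
    rw [show Rh p (p-1-(m+1)) (m+1) = desc p (p-1-(m+1)) (m+1) * Rh p (p-1-(m+1)+1) m from rfl,
      show p-1-(m+1)+1 = p-1-m by omega]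

lemma toBraid_trivBlock (hp : 1 ≤ p) : toBraid p (trivBlock p) = 1 := by
  unfold trivBlock
  rw [toBraid_trivPart p p le_rfl]
  have h1 : LPf p p = Lh p 0 (p-1) := by
    have := LPf_eq_Lh p (p-1) le_rfl
    simp only [Nat.sub_self] at this
    rw [show LPf p p = LPf p ((p-1)+1) from congrArg (LPf p) (by omega)]
    show LPf p (p-1) * asc p 0 (p-1-(p-1)) = _
    simpa [Nat.sub_self, Lh, asc] using this
  have h2 : RPf p p = Rh p 0 (p-1) := by
    have h3 := RPf_eq_Rh p (p-1) le_rfl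
    rw [show RPf p p = RPf p ((p-1)+1) from congrArg (RPf p) (by omega), h3, Nat.sub_self]
  rw [h1, h2, Lh_eq_Rh p (p-1) 0 (by omega)]
  group

end TrivBlock

section Markov

lemma WF_wRound (p : ℕ) : WF p (wRound p) := by
  intro l hl
  unfold wRound at hl
  obtain ⟨k, hk, rfl⟩ := List.mem_map.mp hl
  have := List.mem_range.mp hk
  simp only
  omega

lemma WF_layeredRound (p ρ : ℕ) : WF p (layeredRound p ρ) := by
  intro l hl
  obtain ⟨k, hk, rfl⟩ := List.mem_map.mp hl
  have := List.mem_range.mp hk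
  simp only
  omega

lemma WF_append {p : ℕ} {v w : Word} (h1 : WF p v) (h2 : WF p w) : WF p (v ++ w) := by
  intro l hl
  rcases List.mem_append.mp hl with h | h
  · exact h1 l h
  · exact h2 l h

lemma WF_trivBlock (p : ℕ) : WF p (trivBlock p) := by
  intro l hl
  rw [trivBlock, List.mem_flatten] at hl
  obtain ⟨w, hw, hlw⟩ := hl
  obtain ⟨ρ, _, rfl⟩ := List.mem_map.mp hw
  exact WF_layeredRound p ρ l hlw

lemma WF_flatten_replicate {p : ℕ} {x : Word} (h : WF p x) (n : ℕ) :
    WF p (List.replicate n x).flatten := by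
  intro l hl
  rw [List.mem_flatten] at hl
  obtain ⟨w, hw, hlw⟩ := hl
  rw [List.eq_of_mem_replicate hw] at hlw
  exact h l hlw

lemma wRound_succ (m : ℕ) (hm : 1 ≤ m) :
    wRound (m+1) = wRound m ++ [(m-1, decide ((m-1) % 2 = 0))] := by
  unfold wRound
  rw [show (m+1) - 1 = (m-1) + 1 by omega, List.range_succ, List.map_append]
  rfl

lemma markov_wRound : ∀ m : ℕ, 1 ≤ m → MarkovEquiv (m, wRound m) (1, []) := by
  intro m
  induction m with
  | zero => omega
  | succ m ih =>
    intro _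
    by_cases hm : 1 ≤ m
    · have step : MarkovStep (m, wRound m) (m+1, wRound m ++ [(m-1, decide ((m-1)%2=0))]) :=
        MarkovStep.stab m (wRound m) _ (WF_wRound m) hm
      rw [← wRound_succ m hm] at step
      exact Relation.EqvGen.trans _ _ _
        (Relation.EqvGen.symm _ _ (Relation.EqvGen.rel _ _ step)) (ih hm)
    · have : m = 0 := by omega
      subst this
      show MarkovEquiv (1, wRound 1) (1, [])
      have : wRound 1 = [] := rfl
      rw [this]
      exact Relation.EqvGen.refl _

lemma toBraid_flatten_replicate (p n : ℕ) (x : Word) (hx : toBraid p x = 1) :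
    toBraid p (List.replicate n x).flatten = 1 := by
  induction n with
  | zero => simp [toBraid]
  | succ n ih =>
    rw [List.replicate_succ, List.flatten_cons, toBraid_append, hx, one_mul, ih]

lemma trivial_W' (p n : ℕ) (hp : 1 ≤ p) :
    IsTrivialClosure p ((List.replicate n (trivBlock p)).flatten ++ wRound p) := by
  refine ⟨1, ?_⟩
  have h1 : toBraid p ((List.replicate n (trivBlock p)).flatten ++ wRound p)
      = toBraid p (wRound p) := by
    rw [toBraid_append, toBraid_flatten_replicate p n _ (toBraid_trivBlock p hp), one_mul]
  have step : MarkovStep (p, (List.replicate n (trivBlock p)).flatten ++ wRound p)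
      (p, wRound p) :=
    MarkovStep.braid p _ _
      (WF_append (WF_flatten_replicate (WF_trivBlock p) n) (WF_wRound p)) (WF_wRound p) h1
  exact Relation.EqvGen.trans _ _ _ (Relation.EqvGen.rel _ _ step) (markov_wRound p hp)

end Markov

section Counting

/-- Mismatch count of signs, as a recursive function. -/
def mcL : Word → Word → ℕ
  | a::v, b::w => (if a.2 ≠ b.2 then 1 else 0) + mcL v w
  | _, _ => 0

/-- The set of mismatch positions. -/
def mcSet (v w : Word) : Finset ℕ :=
  (Finset.range v.length).filter fun i => (v.getD i (0,true)).2 ≠ (w.getD i (0,true)).2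

lemma mcSet_subset (v w : Word) : mcSet v w ⊆ Finset.range v.length := Finset.filter_subset _ _

lemma mcSet_card : ∀ v w : Word, v.length = w.length → (mcSet v w).card = mcL v w := by
  intro v
  induction v with
  | nil => intro w _; simp [mcSet, mcL]
  | cons a v ih =>
    intro w hlen
    cases w with
    | nil => simp at hlen
    | cons b w =>
      unfold mcSet
      rw [Finset.card_filter, List.length_cons, Finset.sum_range_succ']
      have := ih w (by simpa using hlen)
      unfold mcSet at this
      rw [Finset.card_filter] at this
      simp only [List.getD_cons_succ] at *
      rw [this]
      show mcL v w + _ = mcL (a::v) (b::w)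
      simp only [List.getD_cons_zero, mcL]
      split_ifs <;> omega

lemma flipAt_mcSet : ∀ v w : Word, v.map Prod.fst = w.map Prod.fst →
    flipAt v (mcSet v w) = w := by
  intro v w hf
  have hl : v.length = w.length := by
    have := congrArg List.length hf; simpa using this
  apply List.ext_getElem
  · simp [flipAt, hl]
  · intro n h1 h2
    have hn : n < v.length := by simpa [flipAt] using h1
    have hnw : n < w.length := by omega
    simp only [flipAt, List.getElem_map, List.getElem_zipIdx, Prod.swap_prod_mk, zero_add]
    have hfst : v[n].1 = w[n].1 := by
      have := congrArg (fun l => l.getD n 0) hf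
      simpa [List.getD_eq_getElem, hn, hnw] using this
    by_cases hm : n ∈ mcSet v w
    · simp only [hm, if_pos]
      have hsnd : v[n].2 ≠ w[n].2 := by
        have := (Finset.mem_filter.mp hm).2
        simpa [List.getD_eq_getElem, hn, hnw] using this
      have : (!v[n].2) = w[n].2 := by
        cases hv : v[n].2 <;> cases hw : w[n].2 <;> simp_all
      exact Prod.ext hfst this
    · simp only [hm, if_neg, not_false_iff]
      have hsnd : v[n].2 = w[n].2 := by
        by_contra hc
        exact hm (Finset.mem_filter.mpr ⟨Finset.mem_range.mpr hn, by
          simpa [List.getD_eq_getElem, hn, hnw] using hc⟩)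
      exact Prod.ext hfst hsnd

lemma mcL_append : ∀ v₁ w₁ v₂ w₂ : Word, v₁.length = w₁.length →
    mcL (v₁ ++ v₂) (w₁ ++ w₂) = mcL v₁ w₁ + mcL v₂ w₂ := by
  intro v₁
  induction v₁ with
  | nil => intro w₁ v₂ w₂ h; rw [List.length_nil] at h
           rw [(List.length_eq_zero_iff.mp h.symm)]; simp [mcL]
  | cons a v ih =>
    intro w₁ v₂ w₂ h
    cases w₁ with
    | nil => simp at h
    | cons b w =>
      simp only [List.cons_append, mcL, List.append_eq]
      rw [ih w v₂ w₂ (by simpa using h)]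
      omega

lemma flatten_map_length (f g : ℕ → Word) (hlen : ∀ ρ, (f ρ).length = (g ρ).length) :
    ∀ m, ((List.range m).map f).flatten.length = ((List.range m).map g).flatten.length := by
  intro m
  induction m with
  | zero => simp
  | succ m ih => rw [List.range_succ]; simp [ih, hlen]

lemma mcL_flatten_map (f g : ℕ → Word) (hlen : ∀ ρ, (f ρ).length = (g ρ).length) :
    ∀ m, mcL ((List.range m).map f).flatten ((List.range m).map g).flatten
      = (((List.range m).map fun ρ => mcL (f ρ) (g ρ))).sum := by
  intro m
  induction m with
  | zero => simp [mcL]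
  | succ m ih =>
    rw [List.range_succ]
    simp only [List.map_append, List.flatten_append, List.map_cons, List.map_nil,
      List.flatten_cons, List.flatten_nil, List.append_nil, List.sum_append, List.sum_cons,
      List.sum_nil, add_zero]
    rw [mcL_append _ _ _ _ (flatten_map_length f g hlen m), ih]

lemma mcL_map (f g : ℕ → Letter) : ∀ l : List ℕ,
    mcL (l.map f) (l.map g) = l.countP fun k => decide ((f k).2 ≠ (g k).2) := by
  intro l
  induction l with
  | nil => simp [mcL]
  | cons a l ih =>
    simp only [List.map_cons, mcL, List.countP_cons, ih]
    by_cases h : (f a).2 = (g a).2 <;> simp [h] <;> omega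

/-- Count of `(a+i) % 2 = 0` for `i < N`. -/
lemma countP_even_shift (a : ℕ) : ∀ N,
    (List.range N).countP (fun i => decide ((a + i) % 2 = 0))
      = (if a % 2 = 0 then (N+1)/2 else N/2) := by
  intro N
  induction N with
  | zero => split_ifs <;> simp
  | succ N ih =>
    rw [List.range_succ, List.countP_append, ih]
    simp only [List.countP_cons, List.countP_nil]
    rcases Nat.even_or_odd (a + N) with h | h
    · have : (a + N) % 2 = 0 := Nat.even_iff.mp h
      simp only [this]
      norm_num
      split_ifs <;> omega
    · have : (a + N) % 2 = 1 := Nat.odd_iff.mp h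
      simp only [this]
      norm_num
      split_ifs <;> omega

lemma round_count (p ρ : ℕ) (hp : p % 2 = 0) (hp2 : 2 ≤ p) (hρ : ρ < p) :
    mcL (wRound p) (layeredRound p ρ) = p/2 - 1 + ρ % 2 := by
  unfold wRound layeredRound
  rw [mcL_map]
  set c := p - 1 - ρ with hc
  have hcq : c ≤ p - 1 := by omega
  rw [show p - 1 = c + ((p-1) - c) from by omega, List.range_add,
    List.countP_append, List.countP_map]
  have h1 : (List.range c).countP
        (fun k => decide (((k : ℕ), decide (k % 2 = 0)).2 ≠ ((k : ℕ), decide (k < c)).2))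
      = (List.range c).countP (fun i => decide ((1 + i) % 2 = 0)) := by
    apply List.countP_congr
    intro k hk
    have hkc : k < c := List.mem_range.mp hk
    rcases Nat.mod_two_eq_zero_or_one k with he | he <;>
      simp [he, hkc, Nat.add_mod, decide_eq_true_eq]
  have h2 : ((fun k => decide (((k:ℕ), decide (k % 2 = 0)).2 ≠ ((k:ℕ), decide (k < c)).2)) ∘
        (fun x => c + x))
      = fun i => decide ((c + i) % 2 = 0) := by
    funext i
    have : ¬ (c + i < c) := by omega
    rcases Nat.mod_two_eq_zero_or_one ((c+i)) with he | he <;> simp [this, he]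
  rw [h1, h2, countP_even_shift 1, countP_even_shift c]
  rcases Nat.mod_two_eq_zero_or_one c with he | he <;> simp [he] <;> omega

lemma block_sum (p : ℕ) (hp : p % 2 = 0) (hp2 : 2 ≤ p) :
    ((List.range p).map fun ρ => mcL (wRound p) (layeredRound p ρ)).sum = p/2 * (p-1) := by
  have hcong : ((List.range p).map fun ρ => mcL (wRound p) (layeredRound p ρ))
      = (List.range p).map fun ρ => p/2 - 1 + ρ % 2 := by
    apply List.map_congr_left
    intro ρ hρ
    exact round_count p ρ hp hp2 (List.mem_range.mp hρ)
  rw [hcong]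
  obtain ⟨m, hm⟩ : ∃ m, p = 2 * m := ⟨p/2, by omega⟩
  subst hm
  have key : ∀ k : ℕ, ((List.range (2*k)).map fun ρ => (2*m)/2 - 1 + ρ % 2).sum
      = k * (2 * ((2*m)/2 - 1) + 1) := by
    intro k
    induction k with
    | zero => simp
    | succ k ih =>
      rw [show 2*(k+1) = (2*k+1)+1 by ring, List.range_succ, show 2*k+1 = (2*k)+1 from rfl,
        List.range_succ]
      simp only [List.map_append, List.sum_append, ih, List.map_cons, List.map_nil,
        List.sum_cons, List.sum_nil]
      have e1 : (2*k) % 2 = 0 := by omega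
      have e2 : (2*k+1) % 2 = 1 := by omega
      rw [e1, e2]
      generalize (2*m)/2 - 1 = t
      ring
  rw [key m]
  have h4 : (2*m)/2 = m := by omega
  rw [h4]
  cases m with
  | zero => simp
  | succ m =>
    congr 1

end Counting

section Assembly

def blockW (p : ℕ) : Word := (List.replicate p (wRound p)).flatten

lemma flatten_replicate_mul {α : Type*} (x : List α) (k : ℕ) :
    ∀ n, (List.replicate (n*k) x).flatten
      = (List.replicate n (List.replicate k x).flatten).flatten := by
  intro n
  induction n with
  | zero => simp
  | succ n ih =>
    rw [show (n+1)*k = n*k + k by ring, List.replicate_add, List.flatten_append, ih,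
      show n+1 = n+1 from rfl, List.replicate_add, List.flatten_append]
    simp

lemma length_wRound (p : ℕ) : (wRound p).length = p - 1 := by simp [wRound]
lemma length_layeredRound (p ρ : ℕ) : (layeredRound p ρ).length = p - 1 := by
  simp [layeredRound]

lemma length_trivBlock (p : ℕ) : (trivBlock p).length = p * (p-1) := by
  rw [trivBlock, List.length_flatten, List.map_map]
  rw [List.map_congr_left (fun ρ _ => by
    show (List.length ∘ layeredRound p) ρ = (fun _ => p - 1) ρ
    simp [length_layeredRound])]
  simp [List.map_const', Finset.sum_const, mul_comm]

lemma length_blockW (p : ℕ) : (blockW p).length = p * (p-1) := by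
  rw [blockW, List.length_flatten, List.map_replicate, length_wRound]
  simp [mul_comm]

lemma mcL_self : ∀ v : Word, mcL v v = 0 := by
  intro v
  induction v with
  | nil => simp [mcL]
  | cons a v ih => simp [mcL, ih]

lemma mcL_flatten_replicate (x y : Word) (h : x.length = y.length) :
    ∀ n, mcL (List.replicate n x).flatten (List.replicate n y).flatten = n * mcL x y := by
  intro n
  induction n with
  | zero => simpa using mcL_self []
  | succ n ih =>
    rw [List.replicate_succ, List.replicate_succ, List.flatten_cons, List.flatten_cons,
      mcL_append _ _ _ _ h, ih]
    ring

lemma blockW_as_map (p : ℕ) : blockW p = ((List.range p).map fun _ => wRound p).flatten := by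
  rw [blockW, List.map_const', List.length_range]

lemma mcL_block (p : ℕ) (hp : p % 2 = 0) (hp2 : 2 ≤ p) :
    mcL (blockW p) (trivBlock p) = p/2 * (p-1) := by
  rw [blockW_as_map, trivBlock,
    mcL_flatten_map _ _ (fun ρ => by rw [length_wRound, length_layeredRound]) p,
    block_sum p hp hp2]

lemma regroup (p n : ℕ) :
    wWord p (n*p+1) = (List.replicate n (blockW p)).flatten ++ wRound p := by
  rw [wWord, List.replicate_add, List.flatten_append, flatten_replicate_mul, blockW]
  simp

lemma mcL_total (p n : ℕ) (hp : p % 2 = 0) (hp2 : 2 ≤ p) :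
    mcL (wWord p (n*p+1)) ((List.replicate n (trivBlock p)).flatten ++ wRound p)
      = n * (p/2 * (p-1)) := by
  rw [regroup, mcL_append _ _ _ _ (by
      rw [List.length_flatten, List.length_flatten, List.map_replicate, List.map_replicate,
        length_blockW, length_trivBlock]),
    mcL_flatten_replicate _ _ (by rw [length_blockW, length_trivBlock]) n,
    mcL_block p hp hp2, mcL_self]
  ring

lemma map_fst_wRound (p : ℕ) : (wRound p).map Prod.fst = List.range (p-1) := by
  rw [wRound, List.map_map]
  exact (List.map_congr_left fun k _ => rfl).trans (List.map_id' _)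

lemma map_fst_layeredRound (p ρ : ℕ) :
    (layeredRound p ρ).map Prod.fst = List.range (p-1) := by
  rw [layeredRound, List.map_map]
  exact (List.map_congr_left fun k _ => rfl).trans (List.map_id' _)

lemma map_fst_trivBlock (p : ℕ) :
    (trivBlock p).map Prod.fst = (List.replicate p (List.range (p-1))).flatten := by
  rw [trivBlock, List.map_flatten, List.map_map]
  congr 1
  rw [List.map_congr_left (fun ρ _ => by
    show (List.map Prod.fst ∘ layeredRound p) ρ = (fun _ => List.range (p-1)) ρ
    simp [map_fst_layeredRound])]
  rw [List.map_const', List.length_range]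

lemma map_fst_eq (p n : ℕ) :
    (wWord p (n*p+1)).map Prod.fst
      = ((List.replicate n (trivBlock p)).flatten ++ wRound p).map Prod.fst := by
  rw [regroup, List.map_append, List.map_append, List.map_flatten, List.map_flatten,
    List.map_replicate, List.map_replicate, map_fst_trivBlock]
  congr 2
  rw [blockW, List.map_flatten, List.map_replicate, map_fst_wRound]

end Assembly

/-- For even `p ≥ 4` and every `n ≥ 1`, `u(W(p, np+1)) ≤ np(p-1)/2`. -/
theorem unknottingNumber_weaving_even (p : ℕ) (hp : 4 ≤ p) (he : Even p)
    (n : ℕ) (hn : 1 ≤ n) :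
    linkUnknottingNumber p (wWord p (n * p + 1)) ≤ n * p * (p - 1) / 2 := by
  have hpm : p % 2 = 0 := Nat.even_iff.mp he
  set w := wWord p (n*p+1) with hw
  set W' := (List.replicate n (trivBlock p)).flatten ++ wRound p with hW'
  have hfst : w.map Prod.fst = W'.map Prod.fst := map_fst_eq p n
  have hlen : w.length = W'.length := by
    have := congrArg List.length hfst; simpa using this
  set S := mcSet w W' with hS
  have hflip : flipAt w S = W' := flipAt_mcSet w W' hfst
  have hcard : S.card = n * (p/2*(p-1)) := by
    rw [hS, mcSet_card w W' hlen]
    exact mcL_total p n hpm (by omega)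
  have htriv : IsTrivialClosure p (flipAt w S) := by
    rw [hflip]; exact trivial_W' p n (by omega)
  have hle : linkUnknottingNumber p w ≤ S.card := by
    apply Nat.sInf_le
    exact ⟨p, w, Relation.EqvGen.refl _, S, mcSet_subset w W', rfl, htriv⟩
  have harith : n * (p/2*(p-1)) = n * p * (p-1) / 2 := by
    obtain ⟨m, hm⟩ := he
    have h2 : p = 2*m := by omega
    have h3 : n * p * (p-1) = 2 * (n * (p/2*(p-1))) := by
      rw [h2]
      have h4 : (2*m)/2 = m := by omega
      rw [h4]; ring
    rw [h3, Nat.mul_div_cancel_left _ (by norm_num)]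
  rw [hcard, harith] at hle
  exact hle


end Weaving
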